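/- arXiv:0808.2839 — 6 statements merged into one kernel-verified Lean document; each statement's English description precedes it below -/
import Mathlib

section
/- The pseudoquandle of normal subgroups of the quaternion group Q₈ is not a quandle: there exist normal subgroups p and q of Q₈ such that no normal subgroup r satisfies r * q = p. Specifically, taking p = ⟨i⟩ and q = ⟨j⟩, there is no normal subgroup r of Q₈ with r * q = p. -/
open Pointwise

/-! Both `⟨i⟩` and `⟨j⟩` have order 4, hence index 2, in `Q₈`, so they are normal. If `r * ⟨j⟩ = ⟨i⟩`
then, since `1 ∈ r`, we would get `j ∈ ⟨i⟩`, which fails because `⟨i⟩` consists of the elements `a k`. -/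

theorem Subgroup.normal_zpowers_of_two_mul_orderOf_eq_card {G : Type*} [Group G] [Finite G]
    {g : G} (h : 2 * orderOf g = Nat.card G) : (Subgroup.zpowers g).Normal := by
  refine Subgroup.normal_of_index_eq_two ?_
  have hcard := (Subgroup.zpowers g).index_mul_card
  rw [Nat.card_zpowers, ← h] at hcard
  exact Nat.eq_of_mul_eq_mul_right (orderOf_pos g) hcard

theorem Subgroup.le_of_coe_mul_eq {G : Type*} [Group G] {r q p : Subgroup G}
    (h : (r : Set G) * q = p) : q ≤ p := fun x hx => by
  rw [← SetLike.mem_coe, ← h]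
  exact Set.subset_mul_right _ r.one_mem hx

namespace QuaternionGroup

variable {n : ℕ} [NeZero n]

theorem zpowers_a_one_normal : (Subgroup.zpowers (a 1 : QuaternionGroup n)).Normal := by
  refine Subgroup.normal_zpowers_of_two_mul_orderOf_eq_card ?_
  rw [orderOf_a_one, Nat.card_eq_fintype_card, card]
  ring

theorem zpowers_xa_normal (i : ZMod (2 * 2)) :
    (Subgroup.zpowers (xa i : QuaternionGroup 2)).Normal := by
  refine Subgroup.normal_zpowers_of_two_mul_orderOf_eq_card ?_
  rw [orderOf_xa, Nat.card_eq_fintype_card, card]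

theorem xa_notMem_zpowers_a_one (i : ZMod (2 * n)) :
    xa i ∉ Subgroup.zpowers (a 1 : QuaternionGroup n) := by
  rw [← mem_powers_iff_mem_zpowers]
  rintro ⟨k, hk⟩
  simp only [a_one_pow] at hk
  cases hk

end QuaternionGroup

/-- In the quaternion group `Q₈`, with `p = ⟨i⟩` and `q = ⟨j⟩` (both normal),
there is no normal subgroup `r` with `r * q = p`; hence the pseudoquandle of
normal subgroups of `Q₈` is not a quandle. -/
theorem quaternion_pseudoquandle_not_quandle :
    ∃ p q : Subgroup (QuaternionGroup 2),
      p = Subgroup.zpowers (QuaternionGroup.a 1) ∧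
      q = Subgroup.zpowers (QuaternionGroup.xa 0) ∧
      p.Normal ∧ q.Normal ∧
      ¬ ∃ r : Subgroup (QuaternionGroup 2), r.Normal ∧
          (r : Set (QuaternionGroup 2)) * (q : Set (QuaternionGroup 2))
            = (p : Set (QuaternionGroup 2)) := by
  refine ⟨_, _, rfl, rfl, QuaternionGroup.zpowers_a_one_normal,
    QuaternionGroup.zpowers_xa_normal 0, ?_⟩
  rintro ⟨r, -, hr⟩
  exact QuaternionGroup.xa_notMem_zpowers_a_one 0
    (Subgroup.le_of_coe_mul_eq hr (Subgroup.mem_zpowers _))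
end

section
/- In a pseudoquandle P, the kernel ker(p) = {q ∈ P : p * q = q * p = p} of any element p is closed under the operation: if x, y ∈ ker(p) then x * y ∈ ker(p). -/
/-- In a pseudoquandle, the kernel `ker p = {q | p*q = q*p = p}` is closed
under the operation. -/
theorem ker_closed {P : Type*} (op : P → P → P)
    (idem : ∀ x, op x x = x)
    (dist : ∀ x y z, op (op x y) z = op (op x z) (op y z))
    (p x y : P)
    (hx : x ∈ {q : P | op p q = p ∧ op q p = p})
    (hy : y ∈ {q : P | op p q = p ∧ op q p = p}) :
    op x y ∈ {q : P | op p q = p ∧ op q p = p} := by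
  obtain ⟨hpx, hxp⟩ := hx
  obtain ⟨hpy, hyp⟩ := hy
  constructor
  · calc op p (op x y) = op (op p y) (op x y) := by rw [hpy]
      _ = op (op p x) y := (dist p x y).symm
      _ = p := by rw [hpx, hpy]
  · calc op (op x y) p = op (op x p) (op y p) := dist x y p
      _ = p := by rw [hxp, hyp, idem]
end

section
/- Let P = {p₁, ..., pₙ} be a finite commutative pseudoquandle with ker(p₁) ⊆ ker(p₂) ⊆ ... ⊆ ker(pₙ). Then P = ker(pₙ), and for each i, coker(pᵢ) = P \ ker(pᵢ) is closed under the operation. -/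
/-!
Each `p` lies in its own kernel, since `p * p = p`. If `ker a ⊆ ker b`, then `a ∈ ker b`, i.e.
`b * a = b`; as the kernels form a chain, every product `a * b` is `a` or `b`. The operation is
therefore conservative, so every subset of `P`, in particular every cokernel, is closed under it,
and the largest kernel contains every element.
-/

namespace Pseudoquandle

variable {P : Type*} (op : P → P → P)

def ker (p : P) : Set P := {q | op p q = p}

variable {op}

theorem self_mem_ker (idem : ∀ x, op x x = x) (p : P) : p ∈ ker op p :=
  idem p

theorem mem_ker_of_ker_subset (idem : ∀ x, op x x = x) {a b : P} (h : ker op a ⊆ ker op b) :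
    a ∈ ker op b :=
  h (self_mem_ker idem a)

variable {ι : Type*} [LinearOrder ι] {e : P ≃ ι}

theorem ker_eq_univ_of_isTop (idem : ∀ x, op x x = x) (mono : Monotone (ker op ∘ e.symm))
    {t : ι} (ht : IsTop t) : ker op (e.symm t) = Set.univ :=
  Set.eq_univ_of_forall fun q => by
    simpa using mono (ht (e q)) (by simpa using self_mem_ker idem q)

theorem op_eq_or_eq_of_monotone (comm : ∀ x y, op x y = op y x) (idem : ∀ x, op x x = x)
    (mono : Monotone (ker op ∘ e.symm)) (a b : P) : op a b = a ∨ op a b = b := by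
  rcases le_total (e a) (e b) with hab | hba
  · have hb : op b a = b := mem_ker_of_ker_subset idem (by simpa using mono hab)
    exact Or.inr (comm a b ▸ hb)
  · exact Or.inl (mem_ker_of_ker_subset idem (by simpa using mono hba))

theorem op_mem_of_forall_op_eq_or_eq (conservative : ∀ a b, op a b = a ∨ op a b = b)
    {S : Set P} {x y : P} (hx : x ∈ S) (hy : y ∈ S) : op x y ∈ S := by
  rcases conservative x y with h | h <;> rw [h] <;> assumption

end Pseudoquandle

open Pseudoquandle in
theorem ascending_kernels_general {P : Type*} (op : P → P → P)
    (comm : ∀ x y, op x y = op y x)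
    (idem : ∀ x, op x x = x)
    (n : ℕ) (e : P ≃ Fin (n + 1))
    (chain : ∀ i j : Fin (n + 1), i ≤ j →
      {q : P | op (e.symm i) q = e.symm i} ⊆ {q : P | op (e.symm j) q = e.symm j}) :
    (∀ q : P, op (e.symm (Fin.last n)) q = e.symm (Fin.last n)) ∧
    (∀ p x y : P, op p x ≠ p → op p y ≠ p → op p (op x y) ≠ p) := by
  have mono : Monotone (ker op ∘ e.symm) := fun i j hij => chain i j hij
  refine ⟨fun q => ?_, fun p x y hx hy => ?_⟩
  · exact Set.eq_univ_iff_forall.mp (ker_eq_univ_of_isTop idem mono Fin.le_last) q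
  · exact op_mem_of_forall_op_eq_or_eq (S := (ker op p)ᶜ)
      (op_eq_or_eq_of_monotone comm idem mono) hx hy

/-- If a finite commutative pseudoquandle `P = {p₀, …, pₙ}` has ascending
kernels `ker p₀ ⊆ … ⊆ ker pₙ`, then `P = ker pₙ` and every cokernel
`coker pᵢ` is closed under the operation. -/
theorem ascending_kernels {P : Type*} [Fintype P] (op : P → P → P)
    (comm : ∀ x y, op x y = op y x)
    (idem : ∀ x, op x x = x)
    (dist : ∀ x y z, op (op x y) z = op (op x z) (op y z))
    (n : ℕ) (e : P ≃ Fin (n + 1))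
    (chain : ∀ i j : Fin (n + 1), i ≤ j →
      {q : P | op (e.symm i) q = e.symm i} ⊆ {q : P | op (e.symm j) q = e.symm j}) :
    (∀ q : P, op (e.symm (Fin.last n)) q = e.symm (Fin.last n)) ∧
    (∀ p x y : P, op p x ≠ p → op p y ≠ p → op p (op x y) ≠ p) :=
  ascending_kernels_general op comm idem n e chain
end

section
/- In a commutative pseudoquandle P, if p ∈ ker(q) then ker(p) ⊆ ker(q). -/
theorem left_distrib_of_comm_of_right_distrib {P : Type*} (op : P → P → P)
    (comm : ∀ x y, op x y = op y x)
    (dist : ∀ x y z, op (op x y) z = op (op x z) (op y z)) (x y z : P) :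
    op x (op y z) = op (op x y) (op x z) := by
  rw [comm x, dist, comm y, comm z]

theorem ker_mono_general {P : Type*} (op : P → P → P)
    (comm : ∀ x y, op x y = op y x)
    (dist : ∀ x y z, op (op x y) z = op (op x z) (op y z))
    (p q : P) (hpq : op p q = q) :
    {s : P | op s p = p} ⊆ {s : P | op s q = q} := by
  intro s (hs : op s p = p)
  show op s q = q
  have ldist := left_distrib_of_comm_of_right_distrib op comm dist
  calc op s q = op s (op p q) := by rw [hpq]
    _ = op p (op s q) := by rw [ldist, hs]
    _ = op (op s q) p := comm _ _
    _ = op p (op q p) := by rw [dist, hs]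
    _ = q := by rw [comm q p, hpq, hpq]

/-- In a commutative pseudoquandle, if `p ∈ ker q` then `ker p ⊆ ker q`. -/
theorem ker_mono {P : Type*} (op : P → P → P)
    (comm : ∀ x y, op x y = op y x)
    (idem : ∀ x, op x x = x)
    (dist : ∀ x y z, op (op x y) z = op (op x z) (op y z))
    (p q : P) (hpq : op p q = q) :
    {s : P | op s p = p} ⊆ {s : P | op s q = q} :=
  ker_mono_general op comm dist p q hpq
end

section
/- In a pseudoquandle P, for every p ∈ P the kernel satisfies ker(p) * ker(p) = ker(p), where A * B = {a * b : a ∈ A, b ∈ B}. -/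
section Pseudoquandle

variable {P : Type*} (op : P → P → P)

def ker (p : P) : Set P := {q | op p q = p ∧ op q p = p}

variable {op}

theorem subset_image2_self_of_idem (idem : ∀ x, op x x = x) (s : Set P) :
    s ⊆ Set.image2 op s s :=
  fun x hx => ⟨x, hx, x, hx, idem x⟩

theorem op_mem_ker (idem : ∀ x, op x x = x)
    (dist : ∀ x y z, op (op x y) z = op (op x z) (op y z))
    {p a b : P} (ha : a ∈ ker op p) (hb : b ∈ ker op p) : op a b ∈ ker op p := by
  constructor
  · -- `(p * a) * b = (p * b) * (a * b)` collapses to `p = p * (a * b)`.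
    have h := dist p a b
    rw [ha.1, hb.1] at h
    exact h.symm
  · rw [dist, ha.2, hb.2, idem]

theorem image2_ker_subset (idem : ∀ x, op x x = x)
    (dist : ∀ x y z, op (op x y) z = op (op x z) (op y z)) (p : P) :
    Set.image2 op (ker op p) (ker op p) ⊆ ker op p := by
  rintro _ ⟨a, ha, b, hb, rfl⟩
  exact op_mem_ker idem dist ha hb

end Pseudoquandle

/-- In a pseudoquandle, `ker p * ker p = ker p`, where
`A * B = {a * b | a ∈ A, b ∈ B}`. -/
theorem ker_sq {P : Type*} (op : P → P → P)
    (idem : ∀ x, op x x = x)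
    (dist : ∀ x y z, op (op x y) z = op (op x z) (op y z))
    (p : P) :
    Set.image2 op {q : P | op p q = p ∧ op q p = p} {q : P | op p q = p ∧ op q p = p}
      = {q : P | op p q = p ∧ op q p = p} :=
  (image2_ker_subset idem dist p).antisymm (subset_image2_self_of_idem idem (ker op p))
end

section
/- In a commutative pseudoquandle P, the map p ↦ ker(p) is injective: ker(p) = ker(q) implies p = q. -/
theorem ker_injective_general {P : Type*} (op : P → P → P)
    (comm : ∀ x y, op x y = op y x)
    (idem : ∀ x, op x x = x)
    (p q : P)
    (h : {s : P | op s p = p} = {s : P | op s q = q}) :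
    p = q := by
  have hp_ker_q : op p q = q := (Set.ext_iff.mp h p).mp (idem p)
  have hq_ker_p : op q p = p := (Set.ext_iff.mp h q).mpr (idem q)
  calc p = op q p := hq_ker_p.symm
    _ = op p q := comm q p
    _ = q := hp_ker_q

/-- In a commutative pseudoquandle, the map `p ↦ ker p` is injective. -/
theorem ker_injective {P : Type*} (op : P → P → P)
    (comm : ∀ x y, op x y = op y x)
    (idem : ∀ x, op x x = x)
    (dist : ∀ x y z, op (op x y) z = op (op x z) (op y z))
    (p q : P)
    (h : {s : P | op s p = p} = {s : P | op s q = q}) :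
    p = q :=
  ker_injective_general op comm idem p q h
end
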